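/- arXiv:nlin/0203046 — 6 statements merged into one kernel-verified Lean document; each statement's English description precedes it below -/
import Mathlib

section
/- Fix t ∈ ℝ and a measurable set A ⊆ M, and assume zero mean drift: ∫_M d(X,t) dν(X) = 0. Since Z_M(0,t) = ν(M) ≠ 0 and k ↦ Z_M(k,t) is continuous, χ_k(A,t) is defined for all k in a neighborhood of 0, and as k → 0 one has the second-order Taylor expansion χ_k(A,t) = ν(A) + i⟨k, T(A,t)⟩ + ∑_{a,b=1}^n k_a k_b g_{ab}(A,t) + o(|k|²), where T(A,t) := ∫_A d(X,t) dν(X) and g_{ab}(A,t) := (1/2)[(ν(A)/ν(M)) ∫_M d_a(X,t) d_b(X,t) dν(X) − ∫_A d_a(X,t) d_b(X,t) dν(X)]. (This is the wave-number expansion Eq. (20) of the hydrodynamic measure, with the explicit coefficients given in the paper for systems with vanishing mean drift.) -/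
/-!
Expanding `exp (iθ) = 1 + iθ - θ²/2 + O(θ³)` under the integral, with `θ = ⟨k, d(X,t)⟩ = O(‖k‖)`,
gives `Z_A(k,t) = ν(A) + i⟨k, T(A,t)⟩ - ½ ∑ k_a k_b ∫_A d_a d_b dν + O(‖k‖³)`, and likewise for
`Z_M`, whose linear term vanishes by the zero drift. If `F = a + u + o(h)` and `G = c + v + o(h)`
with `u → 0` and `v = O(h)`, then `c F / G = a + u - (a / c) v + o(h)`, since the cross terms `u v`
and `v²` are `o(h)`. For `v = -½ ∑ k_a k_b ∫_M d_a d_b dν`, the term `-(a / c) v` combines with the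
quadratic part of `u` into `∑ k_a k_b g_ab`.
-/

open MeasureTheory Asymptotics Filter

/-- `Z_A(k,t) = ∫_A exp(i⟨k, d(X,t)⟩) dν(X)`. -/
noncomputable def Zfun {M : Type*} [MeasurableSpace M] (ν : Measure M)
    {n : ℕ} (d : M → ℝ → Fin n → ℝ) (A : Set M) (k : Fin n → ℝ) (t : ℝ) : ℂ :=
  ∫ X in A, Complex.exp (Complex.I * ((∑ a, k a * d X t a : ℝ) : ℂ)) ∂ν

/-- The hydrodynamic measure `χ_k(A,t) = ν(M) ⬝ Z_A(k,t) / Z_M(k,t)`. -/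
noncomputable def hydroChi {M : Type*} [MeasurableSpace M] (ν : Measure M)
    {n : ℕ} (d : M → ℝ → Fin n → ℝ) (A : Set M) (k : Fin n → ℝ) (t : ℝ) : ℂ :=
  ((ν Set.univ).toReal : ℂ) * Zfun ν d A k t / Zfun ν d Set.univ k t

open scoped Topology

theorem norm_cexp_I_mul_sub_taylor_le {x : ℝ} (hx : |x| ≤ 1) :
    ‖Complex.exp (Complex.I * x) - (1 + Complex.I * x - (x : ℂ) ^ 2 / 2)‖ ≤ |x| ^ 3 := by
  have hIx : ‖Complex.I * x‖ = |x| := by simp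
  have h := Complex.exp_bound (hIx ▸ hx : ‖Complex.I * x‖ ≤ 1) (n := 3) (by norm_num)
  have htaylor : ∑ m ∈ Finset.range 3, (Complex.I * x) ^ m / m.factorial
      = 1 + Complex.I * x - (x : ℂ) ^ 2 / 2 := by
    simp [Finset.sum_range_succ, mul_pow]
    ring
  rw [htaylor, hIx] at h
  exact h.trans (mul_le_of_le_one_right (by positivity) (by norm_num [Nat.factorial]))

theorem abs_sum_mul_le_card_mul {ι : Type*} [Fintype ι] (k v : ι → ℝ) :
    |∑ a, k a * v a| ≤ Fintype.card ι * (‖k‖ * ‖v‖) := by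
  calc |∑ a, k a * v a| ≤ ∑ a, |k a * v a| := Finset.abs_sum_le_sum_abs _ _
    _ ≤ ∑ _a : ι, ‖k‖ * ‖v‖ := Finset.sum_le_sum fun a _ => by
        rw [abs_mul]
        exact mul_le_mul (norm_le_pi_norm k a) (norm_le_pi_norm v a) (abs_nonneg _)
          (norm_nonneg _)
    _ = Fintype.card ι * (‖k‖ * ‖v‖) := by simp

theorem isBigO_ofReal_sum_sum_mul_mul {ι : Type*} [Fintype ι] (w : ι → ι → ℝ)
    (l : Filter (ι → ℝ)) :
    (fun k : ι → ℝ => ((∑ a, ∑ b, k a * k b * w a b : ℝ) : ℂ)) =O[l] fun k => ‖k‖ ^ 2 := by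
  refine (Complex.ofRealCLM.isBigO_comp _ _).trans
    (IsBigO.fun_sum fun a _ => IsBigO.fun_sum fun b _ => ?_)
  refine IsBigO.of_bound |w a b| ?_
  filter_upwards with k
  rw [norm_mul, norm_mul, norm_pow, norm_norm, Real.norm_eq_abs (w a b), mul_comm, sq]
  gcongr
  exacts [norm_le_pi_norm k a, norm_le_pi_norm k b]

theorem isLittleO_const_mul_div_sub_expansion {α : Type*} {l : Filter α} {h : α → ℝ}
    {F G u v : α → ℂ} {a c : ℂ} (hc : c ≠ 0) (hh : Tendsto h l (𝓝 0))
    (hF : (fun x => F x - (a + u x)) =o[l] h) (hG : (fun x => G x - (c + v x)) =o[l] h)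
    (hu : Tendsto u l (𝓝 0)) (hv : v =O[l] h) :
    (fun x => c * F x / G x - (a + u x - a / c * v x)) =o[l] h := by
  set P := fun x => a + u x - a / c * v x
  have hv0 : Tendsto v l (𝓝 0) := hv.trans_tendsto hh
  have hP : Tendsto P l (𝓝 a) := by
    simpa [P] using (tendsto_const_nhds.add hu).sub (hv0.const_mul (a / c))
  have hGc : Tendsto G l (𝓝 c) := by
    simpa using (hG.trans_tendsto hh).add ((tendsto_const_nhds (x := c)).add hv0)
  have hnum : (fun x => c * F x - P x * G x) =o[l] h := by
    have hdecomp : ∀ x, c * F x - P x * G x = c * (F x - (a + u x)) - P x * (G x - (c + v x))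
        - u x * v x + a / c * (v x * v x) := fun x => by
      simp only [P]; field_simp; ring
    simp only [hdecomp]
    refine (((hF.const_mul_left c).sub ?_).sub ?_).add ((?_ : _ =o[l] h).const_mul_left _)
    · simpa using (hP.isBigO_one ℝ).mul_isLittleO hG
    · simpa using ((isLittleO_one_iff ℝ).2 hu).mul_isBigO hv
    · simpa using ((isLittleO_one_iff ℝ).2 hv0).mul_isBigO hv
  have hquot : (fun x => c * F x / G x - P x)
      =ᶠ[l] fun x => (c * F x - P x * G x) * (G x)⁻¹ := by
    filter_upwards [hGc.eventually_ne hc] with x hx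
    field_simp
  simpa using hquot.trans_isLittleO (hnum.mul_isBigO ((hGc.inv₀ hc).isBigO_one ℝ))

section Moments

variable {M : Type*} [MeasurableSpace M] (μ : Measure M) {ι : Type*} [Fintype ι]

theorem integral_sum_mul {f : M → ι → ℝ} (hf : ∀ a, Integrable (fun X => f X a) μ)
    (k : ι → ℝ) : ∫ X, ∑ a, k a * f X a ∂μ = ∑ a, k a * ∫ X, f X a ∂μ := by
  rw [integral_finsetSum _ fun a _ => (hf a).const_mul (k a)]
  simp only [integral_const_mul]

theorem integral_sum_mul_sq {f : M → ι → ℝ}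
    (hf : ∀ a b, Integrable (fun X => f X a * f X b) μ) (k : ι → ℝ) :
    ∫ X, (∑ a, k a * f X a) ^ 2 ∂μ = ∑ a, ∑ b, k a * k b * ∫ X, f X a * f X b ∂μ := by
  have hsq : ∀ X, (∑ a, k a * f X a) ^ 2
      = ∑ p : ι × ι, (k p.1 * k p.2) * (f X p.1 * f X p.2) := fun X => by
    rw [sq, Finset.sum_mul_sum, ← Finset.sum_product']
    exact Finset.sum_congr rfl fun p _ => by ring
  simp_rw [hsq]
  exact (integral_sum_mul μ (f := fun X (p : ι × ι) => f X p.1 * f X p.2)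
    (fun p => hf p.1 p.2) _).trans
    (Fintype.sum_prod_type' fun a b => k a * k b * ∫ X, f X a * f X b ∂μ)

variable [IsFiniteMeasure μ]

theorem norm_integral_cexp_I_mul_sub_taylor_le {s : M → ℝ} (hs : AEStronglyMeasurable s μ)
    {r : ℝ} (hr : r ≤ 1) (hsr : ∀ X, |s X| ≤ r) :
    ‖∫ X, Complex.exp (Complex.I * s X) ∂μ
        - (μ.real Set.univ + Complex.I * ↑(∫ X, s X ∂μ) - ↑(∫ X, s X ^ 2 ∂μ) / 2)‖
      ≤ r ^ 3 * μ.real Set.univ := by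
  have hs_int : Integrable s μ := .of_bound hs r (ae_of_all _ hsr)
  have hs2_int : Integrable (fun X => s X ^ 2) μ :=
    .of_bound (hs.pow 2) (r ^ 2) (ae_of_all _ fun X => by
      simpa using pow_le_pow_left₀ (abs_nonneg _) (hsr X) 2)
  have hexp_int : Integrable (fun X => Complex.exp (Complex.I * s X)) μ :=
    .of_bound (by fun_prop) 1 (ae_of_all _ fun X => by simp [Complex.norm_exp_I_mul_ofReal])
  have hlin_int : Integrable (fun X => 1 + Complex.I * s X) μ :=
    (integrable_const _).add (hs_int.ofReal.const_mul _)
  have hquad_int : Integrable (fun X => (s X : ℂ) ^ 2 / 2) μ := by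
    simpa using hs2_int.ofReal.div_const (2 : ℂ)
  have hpoly : ∫ X, (1 + Complex.I * s X - (s X : ℂ) ^ 2 / 2) ∂μ
      = μ.real Set.univ + Complex.I * ↑(∫ X, s X ∂μ) - ↑(∫ X, s X ^ 2 ∂μ) / 2 := by
    rw [integral_sub hlin_int hquad_int, integral_add (integrable_const _)
      (hs_int.ofReal.const_mul _), integral_const_mul, integral_div, integral_const]
    simp [← Complex.ofReal_pow, integral_complex_ofReal]
  have hpoly_int : Integrable (fun X => 1 + Complex.I * s X - (s X : ℂ) ^ 2 / 2) μ :=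
    hlin_int.sub hquad_int
  rw [← hpoly, ← integral_sub hexp_int hpoly_int]
  refine norm_integral_le_of_norm_le_const (ae_of_all _ fun X => ?_)
  exact (norm_cexp_I_mul_sub_taylor_le ((hsr X).trans hr)).trans
    (pow_le_pow_left₀ (abs_nonneg _) (hsr X) 3)

theorem integral_cexp_sum_mul_sub_taylor_isBigO {f : M → ι → ℝ}
    (hf : AEStronglyMeasurable f μ) {C : ℝ} (hC : ∀ X, ‖f X‖ ≤ C) :
    (fun k : ι → ℝ => ∫ X, Complex.exp (Complex.I * ↑(∑ a, k a * f X a)) ∂μ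
        - (μ.real Set.univ + Complex.I * ↑(∑ a, k a * ∫ X, f X a ∂μ)
          - ↑(∑ a, ∑ b, k a * k b * ∫ X, f X a * f X b ∂μ) / 2))
      =O[𝓝 0] fun k => ‖k‖ ^ 3 := by
  have hfa : ∀ a, AEStronglyMeasurable (fun X => f X a) μ := fun a =>
    (continuous_apply a).comp_aestronglyMeasurable hf
  have hfa_bound : ∀ X a, ‖f X a‖ ≤ C := fun X a => (norm_le_pi_norm (f X) a).trans (hC X)
  have hfa_int : ∀ a, Integrable (fun X => f X a) μ := fun a =>
    .of_bound (hfa a) C (ae_of_all _ fun X => hfa_bound X a)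
  have hfab_int : ∀ a b, Integrable (fun X => f X a * f X b) μ := fun a b =>
    .of_bound ((hfa a).mul (hfa b)) (C * C) (ae_of_all _ fun X => by
      rw [norm_mul]
      exact mul_le_mul (hfa_bound X a) (hfa_bound X b) (norm_nonneg _)
        ((norm_nonneg _).trans (hfa_bound X a)))
  set K : ℝ := Fintype.card ι * C
  have hsmall : ∀ᶠ k : ι → ℝ in 𝓝 0, K * ‖k‖ ≤ 1 :=
    Tendsto.eventually_le_const zero_lt_one (by simpa using tendsto_norm_zero.const_mul K)
  refine IsBigO.of_bound (K ^ 3 * μ.real Set.univ) ?_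
  filter_upwards [hsmall] with k hk
  have hbound : ∀ X, |∑ a, k a * f X a| ≤ K * ‖k‖ := fun X =>
    calc |∑ a, k a * f X a| ≤ Fintype.card ι * (‖k‖ * ‖f X‖) := abs_sum_mul_le_card_mul k (f X)
      _ ≤ Fintype.card ι * (‖k‖ * C) := by gcongr; exact hC X
      _ = K * ‖k‖ := by ring
  have h := norm_integral_cexp_I_mul_sub_taylor_le μ
    ((by fun_prop : Continuous fun v : ι → ℝ => ∑ a, k a * v a).comp_aestronglyMeasurable hf)
    hk hbound
  rw [integral_sum_mul μ hfa_int, integral_sum_mul_sq μ hfab_int] at h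
  refine h.trans_eq ?_
  rw [norm_pow, norm_norm]
  ring

end Moments

theorem Zfun_sub_taylor_isBigO {M : Type*} [MeasurableSpace M] (ν : Measure M)
    [IsFiniteMeasure ν] {n : ℕ} {d : M → ℝ → Fin n → ℝ} {t : ℝ}
    (hd : AEStronglyMeasurable (fun X => d X t) ν) {C : ℝ} (hC : ∀ X, ‖d X t‖ ≤ C)
    (A : Set M) :
    (fun k : Fin n → ℝ => Zfun ν d A k t
        - ((ν A).toReal + Complex.I * ↑(∑ a, k a * (∫ X in A, d X t ∂ν) a)
          - ↑(∑ a, ∑ b, k a * k b * ∫ X in A, d X t a * d X t b ∂ν) / 2))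
      =O[𝓝 0] fun k => ‖k‖ ^ 3 := by
  have hd_int : Integrable (fun X => d X t) (ν.restrict A) :=
    .of_bound hd.restrict C (ae_of_all _ hC)
  have h := integral_cexp_sum_mul_sub_taylor_isBigO (ν.restrict A) hd.restrict hC
  simp_rw [← eval_integral fun b => hd_int.eval b] at h
  rwa [measureReal_restrict_apply_univ] at h

theorem hydroChi_taylor_expansion_general {M : Type*} [MeasurableSpace M]
    (ν : Measure M) [IsFiniteMeasure ν] (hν : 0 < ν Set.univ)
    {n : ℕ} (d : M → ℝ → Fin n → ℝ)
    (hdmeas : ∀ s : ℝ, Measurable fun X => d X s)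
    (hdbd : ∀ s : ℝ, ∃ C : ℝ, ∀ X : M, ‖d X s‖ ≤ C)
    (t : ℝ) (A : Set M)
    (hdrift : (∫ X, d X t ∂ν) = 0)
    (T : Fin n → ℝ) (hT : T = ∫ X in A, d X t ∂ν)
    (g : Fin n → Fin n → ℝ)
    (hg : ∀ a b, g a b = (1 / 2) *
      (((ν A).toReal / (ν Set.univ).toReal) * (∫ X, d X t a * d X t b ∂ν)
        - ∫ X in A, d X t a * d X t b ∂ν)) :
    (fun k : Fin n → ℝ =>
        hydroChi ν d A k t -
          (((ν A).toReal : ℂ)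
            + Complex.I * ((∑ a, k a * T a : ℝ) : ℂ)
            + ((∑ a, ∑ b, k a * k b * g a b : ℝ) : ℂ)))
      =o[nhds (0 : Fin n → ℝ)] (fun k => ‖k‖ ^ 2) := by
  obtain ⟨C, hC⟩ := hdbd t
  have hd_meas := (hdmeas t).aestronglyMeasurable (μ := ν)
  have hc : ((ν Set.univ).toReal : ℂ) ≠ 0 :=
    Complex.ofReal_ne_zero.2 (ENNReal.toReal_pos hν.ne' (measure_ne_top ν _)).ne'
  have hcube : (fun k : Fin n → ℝ => ‖k‖ ^ 3) =o[𝓝 0] fun k => ‖k‖ ^ 2 :=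
    (isLittleO_pow_pow (by norm_num : 2 < 3)).comp_tendsto tendsto_norm_zero
  have hZA := (Zfun_sub_taylor_isBigO ν hd_meas hC A).trans_isLittleO hcube
  have hZM := (Zfun_sub_taylor_isBigO ν hd_meas hC Set.univ).trans_isLittleO hcube
  rw [← hT] at hZA
  simp only [Measure.restrict_univ, hdrift, Pi.zero_apply, mul_zero, Finset.sum_const_zero,
    Complex.ofReal_zero, add_zero] at hZM
  have hu : Tendsto (fun k : Fin n → ℝ => Complex.I * ↑(∑ a, k a * T a)
      - ↑(∑ a, ∑ b, k a * k b * ∫ X in A, d X t a * d X t b ∂ν) / 2) (𝓝 0) (𝓝 0) :=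
    Continuous.tendsto' (by fun_prop) 0 0 (by simp)
  have hg_form : ∀ k : Fin n → ℝ, ∑ a, ∑ b, k a * k b * g a b
      = 1 / 2 * ((ν A).toReal / (ν Set.univ).toReal
          * ∑ a, ∑ b, k a * k b * ∫ X, d X t a * d X t b ∂ν
        - ∑ a, ∑ b, k a * k b * ∫ X in A, d X t a * d X t b ∂ν) := fun k => by
    simp only [hg, Finset.mul_sum, ← Finset.sum_sub_distrib]
    exact Finset.sum_congr rfl fun a _ => Finset.sum_congr rfl fun b _ => by ring
  refine (isLittleO_const_mul_div_sub_expansion hc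
    (by simpa using (tendsto_norm_zero (E := Fin n → ℝ)).pow 2)
    (hZA.congr_left fun k => by ring) (hZM.congr_left fun k => by ring) hu
    ((isBigO_ofReal_sum_sum_mul_mul _ _).const_mul_left (-1 / 2))).congr_left fun k => ?_
  simp only [hydroChi, hg_form]
  push_cast
  ring

/-- second-order Taylor expansion of the hydrodynamic measure as
`k → 0`, for a system with zero mean drift:
`χ_k(A,t) = ν(A) + i⟨k, T(A,t)⟩ + ∑_{a,b} k_a k_b g_{ab}(A,t) + o(|k|²)`,
with `T(A,t) = ∫_A d dν` and
`g_{ab}(A,t) = ½[(ν(A)/ν(M)) ∫_M d_a d_b dν − ∫_A d_a d_b dν]`. -/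
theorem hydroChi_taylor_expansion {M : Type*} [MeasurableSpace M]
    (ν : Measure M) [IsFiniteMeasure ν] (hν : 0 < ν Set.univ)
    {n : ℕ} (hn : 1 ≤ n) (d : M → ℝ → Fin n → ℝ)
    (hdmeas : ∀ s : ℝ, Measurable fun X => d X s)
    (hdbd : ∀ s : ℝ, ∃ C : ℝ, ∀ X : M, ‖d X s‖ ≤ C)
    (t : ℝ) (A : Set M) (hA : MeasurableSet A)
    (hdrift : (∫ X, d X t ∂ν) = 0)
    (T : Fin n → ℝ) (hT : T = ∫ X in A, d X t ∂ν)
    (g : Fin n → Fin n → ℝ)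
    (hg : ∀ a b, g a b = (1 / 2) *
      (((ν A).toReal / (ν Set.univ).toReal) * (∫ X, d X t a * d X t b ∂ν)
        - ∫ X in A, d X t a * d X t b ∂ν)) :
    (fun k : Fin n → ℝ =>
        hydroChi ν d A k t -
          (((ν A).toReal : ℂ)
            + Complex.I * ((∑ a, k a * T a : ℝ) : ℂ)
            + ((∑ a, ∑ b, k a * k b * g a b : ℝ) : ℂ)))
      =o[nhds (0 : Fin n → ℝ)] (fun k => ‖k‖ ^ 2) :=
  hydroChi_taylor_expansion_general ν hν d hdmeas hdbd t A hdrift T hT g hg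
end

section
/- Let A ⊆ M be measurable and suppose the time-τ displacement is constant on A: there is d_A ∈ ℝ^n with d(X, τ) = d_A for all X ∈ A. Then for all k ∈ ℝ^n and t ∈ ℝ, Z_A(k, t+τ) = e^{i⟨k, d_A⟩} · Z_{S^{-1}(A)}(k, t). In particular, whenever Z_M(k, t+τ) ≠ 0 and Z_M(k, t) ≠ 0, one has Z_M(k,t+τ) · χ_k(A, t+τ) = e^{i⟨k, d_A⟩} · Z_M(k,t) · χ_k(S^{-1}(A), t). (This is the exact finite-time form of the de Rham-type equation, Eqs. (23) and (23a), of the paper.) -/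
open MeasureTheory

/-- the exact finite-time de Rham-type equation. If the time-τ
displacement is constant equal to `d_A` on `A`, then
`Z_A(k, t+τ) = e^{i⟨k, d_A⟩} Z_{S⁻¹(A)}(k, t)`, and consequently
`Z_M(k,t+τ) χ_k(A, t+τ) = e^{i⟨k, d_A⟩} Z_M(k,t) χ_k(S⁻¹(A), t)` whenever both
normalizing factors are nonzero. -/
theorem deRham_equation {M : Type*} [MeasurableSpace M]
    (ν : Measure M) [IsFiniteMeasure ν] (hν : 0 < ν Set.univ)
    {n : ℕ} (hn : 1 ≤ n) (d : M → ℝ → Fin n → ℝ)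
    (hdmeas : ∀ s : ℝ, Measurable fun X => d X s)
    (hdbd : ∀ s : ℝ, ∃ C : ℝ, ∀ X : M, ‖d X s‖ ≤ C)
    (S : M ≃ M) (hS : MeasurePreserving S ν ν) (hS' : MeasurePreserving S.symm ν ν)
    (τ : ℝ)
    (hcocycle : ∀ (X : M) (t : ℝ), d X (t + τ) = d X τ + d (S.symm X) t)
    (A : Set M) (hA : MeasurableSet A)
    (dA : Fin n → ℝ) (hdA : ∀ X ∈ A, d X τ = dA) :
    ∀ (k : Fin n → ℝ) (t : ℝ),
      Zfun ν d A k (t + τ)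
        = Complex.exp (Complex.I * ((∑ a, k a * dA a : ℝ) : ℂ))
            * Zfun ν d (S.symm '' A) k t ∧
      (Zfun ν d Set.univ k (t + τ) ≠ 0 → Zfun ν d Set.univ k t ≠ 0 →
        Zfun ν d Set.univ k (t + τ) * hydroChi ν d A k (t + τ)
          = Complex.exp (Complex.I * ((∑ a, k a * dA a : ℝ) : ℂ))
              * Zfun ν d Set.univ k t * hydroChi ν d (S.symm '' A) k t) := by
  intro k t
  set c : ℂ := Complex.exp (Complex.I * ((∑ a, k a * dA a : ℝ) : ℂ)) with hc
  -- measurable equiv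
  let e : M ≃ᵐ M := ⟨S, hS.measurable, hS'.measurable⟩
  have hemb : MeasurableEmbedding (S.symm : M → M) :=
    (e.symm : M ≃ᵐ M).measurableEmbedding
  have key : Zfun ν d A k (t + τ) = c * Zfun ν d (S.symm '' A) k t := by
    have h1 : Zfun ν d (S.symm '' A) k t
        = ∫ X in A, Complex.exp (Complex.I * ((∑ a, k a * d (S.symm X) t a : ℝ) : ℂ)) ∂ν := by
      exact hS'.setIntegral_image_emb hemb _ A
    rw [h1, Zfun, ← integral_const_mul]
    refine setIntegral_congr_fun hA fun X hX => ?_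
    have : d X (t + τ) = d X τ + d (S.symm X) t := hcocycle X t
    rw [this, hdA X hX, ← Complex.exp_add]
    push_cast
    simp [Pi.add_apply, mul_add, Finset.sum_add_distrib]
  refine ⟨key, fun h1 h2 => ?_⟩
  unfold hydroChi
  rw [key]
  field_simp
end

section
/- Let A_1, …, A_m be a finite measurable partition of M into pairwise disjoint sets, and suppose that for each j there is a constant d_j ∈ ℝ^n with d(X, τ) = d_j for all X ∈ S(A_j). Then for all k ∈ ℝ^n and t ∈ ℝ, Z_M(k, t+τ) = ∑_{j=1}^m e^{i⟨k, d_j⟩} Z_{A_j}(k, t). (This is the exact finite-time form of the sum rule Eq. (23d) of the paper, ν(M) e^{s_k τ} = ∑_j e^{i k·d_j} χ_k(A_j).) -/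
open MeasureTheory

/-- Defined so that `Zfun ν d A k t = ∫ X in A, planeWave k (d X t) ∂ν` holds by `rfl`. -/
noncomputable def planeWave {ι : Type*} [Fintype ι] (k v : ι → ℝ) : ℂ :=
  Complex.exp (Complex.I * ((∑ a, k a * v a : ℝ) : ℂ))

section PlaneWave

variable {ι : Type*} [Fintype ι]

lemma planeWave_add (k u v : ι → ℝ) : planeWave k (u + v) = planeWave k u * planeWave k v := by
  simp only [planeWave, Pi.add_apply, mul_add, Finset.sum_add_distrib, Complex.ofReal_add,
    Complex.exp_add]

lemma norm_planeWave (k v : ι → ℝ) : ‖planeWave k v‖ = 1 :=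
  Complex.norm_exp_I_mul_ofReal _

lemma continuous_planeWave (k : ι → ℝ) : Continuous (planeWave k) := by
  unfold planeWave
  fun_prop

lemma integrable_planeWave_comp {M : Type*} [MeasurableSpace M] {ν : Measure M}
    [IsFiniteMeasure ν] (k : ι → ℝ) {g : M → ι → ℝ} (hg : Measurable g) :
    Integrable (fun X => planeWave k (g X)) ν :=
  Integrable.of_bound ((continuous_planeWave k).measurable.comp hg).aestronglyMeasurable 1
    (ae_of_all _ fun X => (norm_planeWave k (g X)).le)

end PlaneWave

section Integral

variable {α β E : Type*} [MeasurableSpace α] [MeasurableSpace β] {μ : Measure α}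
  [NormedAddCommGroup E] [NormedSpace ℝ E]

lemma MeasureTheory.MeasurePreserving.integral_comp_of_aestronglyMeasurable {ν : Measure β}
    {f : α → β} (hf : MeasurePreserving f μ ν) {g : β → E} (hg : AEStronglyMeasurable g ν) :
    ∫ x, g (f x) ∂μ = ∫ y, g y ∂ν := by
  rw [← hf.map_eq, integral_map hf.measurable.aemeasurable (hf.map_eq ▸ hg)]

lemma integral_eq_sum_setIntegral_of_iUnion_eq_univ {ι : Type*} [Fintype ι] {s : ι → Set α}
    (hs : ∀ i, MeasurableSet (s i)) (hdisj : Pairwise (Function.onFun Disjoint s))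
    (hcover : ⋃ i, s i = Set.univ) {f : α → E} (hf : Integrable f μ) :
    ∫ x, f x ∂μ = ∑ i, ∫ x in s i, f x ∂μ := by
  rw [← integral_iUnion_fintype hs hdisj fun i => hf.integrableOn, hcover, setIntegral_univ]

end Integral

lemma Zfun_univ_add_eq_integral_planeWave_mul {M : Type*} [MeasurableSpace M] {ν : Measure M}
    {n : ℕ} {d : M → ℝ → Fin n → ℝ} {S : M ≃ M} (hS : MeasurePreserving S ν ν) {τ : ℝ}
    (hcocycle : ∀ (X : M) (t : ℝ), d X (t + τ) = d X τ + d (S.symm X) t)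
    (k : Fin n → ℝ) (t : ℝ) (hd : Measurable fun X => d X (t + τ)) :
    Zfun ν d Set.univ k (t + τ) = ∫ Y, planeWave k (d (S Y) τ) * planeWave k (d Y t) ∂ν := by
  calc Zfun ν d Set.univ k (t + τ) = ∫ X, planeWave k (d X (t + τ)) ∂ν := setIntegral_univ
    _ = ∫ Y, planeWave k (d (S Y) (t + τ)) ∂ν := (hS.integral_comp_of_aestronglyMeasurable
          ((continuous_planeWave k).measurable.comp hd).aestronglyMeasurable).symm
    _ = _ := by simp only [hcocycle, Equiv.symm_apply_apply, planeWave_add]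

theorem sum_rule_Z_general {M : Type*} [MeasurableSpace M]
    (ν : Measure M) [IsFiniteMeasure ν]
    {n : ℕ} (d : M → ℝ → Fin n → ℝ)
    (hdmeas : ∀ s : ℝ, Measurable fun X => d X s)
    (S : M ≃ M) (hS : MeasurePreserving S ν ν)
    (τ : ℝ)
    (hcocycle : ∀ (X : M) (t : ℝ), d X (t + τ) = d X τ + d (S.symm X) t)
    (m : ℕ) (A : Fin m → Set M)
    (hAmeas : ∀ j, MeasurableSet (A j))
    (hAdisj : ∀ i j, i ≠ j → Disjoint (A i) (A j))
    (hAcover : (⋃ j, A j) = Set.univ)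
    (dj : Fin m → Fin n → ℝ)
    (hdj : ∀ j, ∀ X ∈ S '' A j, d X τ = dj j) :
    ∀ (k : Fin n → ℝ) (t : ℝ),
      Zfun ν d Set.univ k (t + τ)
        = ∑ j, Complex.exp (Complex.I * ((∑ a, k a * dj j a : ℝ) : ℂ))
            * Zfun ν d (A j) k t := by
  intro k t
  have hint : Integrable (fun Y => planeWave k (d (S Y) τ) * planeWave k (d Y t)) ν :=
    (integrable_planeWave_comp k (hdmeas t)).bdd_mul
      ((continuous_planeWave k).measurable.comp
        ((hdmeas τ).comp hS.measurable)).aestronglyMeasurable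
      (ae_of_all _ fun Y => (norm_planeWave k _).le)
  rw [Zfun_univ_add_eq_integral_planeWave_mul hS hcocycle k t (hdmeas (t + τ)),
    integral_eq_sum_setIntegral_of_iUnion_eq_univ hAmeas hAdisj hAcover hint]
  refine Finset.sum_congr rfl fun j _ => ?_
  rw [setIntegral_congr_fun (hAmeas j) fun Y hY => by
    rw [hdj j (S Y) (Set.mem_image_of_mem S hY)], integral_const_mul]
  rfl

/-- exact finite-time form of the sum rule Eq. (23d):
if `d(·,τ)` is constant equal to `d_j` on each image `S(A_j)` of a finite
measurable partition of `M`, then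
`Z_M(k, t+τ) = ∑_j e^{i⟨k, d_j⟩} Z_{A_j}(k, t)`. -/
theorem sum_rule_Z {M : Type*} [MeasurableSpace M]
    (ν : Measure M) [IsFiniteMeasure ν] (hν : 0 < ν Set.univ)
    {n : ℕ} (hn : 1 ≤ n) (d : M → ℝ → Fin n → ℝ)
    (hdmeas : ∀ s : ℝ, Measurable fun X => d X s)
    (hdbd : ∀ s : ℝ, ∃ C : ℝ, ∀ X : M, ‖d X s‖ ≤ C)
    (S : M ≃ M) (hS : MeasurePreserving S ν ν) (hS' : MeasurePreserving S.symm ν ν)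
    (τ : ℝ)
    (hcocycle : ∀ (X : M) (t : ℝ), d X (t + τ) = d X τ + d (S.symm X) t)
    (m : ℕ) (A : Fin m → Set M)
    (hAmeas : ∀ j, MeasurableSet (A j))
    (hAdisj : ∀ i j, i ≠ j → Disjoint (A i) (A j))
    (hAcover : (⋃ j, A j) = Set.univ)
    (dj : Fin m → Fin n → ℝ)
    (hdj : ∀ j, ∀ X ∈ S '' A j, d X τ = dj j) :
    ∀ (k : Fin n → ℝ) (t : ℝ),
      Zfun ν d Set.univ k (t + τ)
        = ∑ j, Complex.exp (Complex.I * ((∑ a, k a * dj j a : ℝ) : ℂ))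
            * Zfun ν d (A j) k t :=
  sum_rule_Z_general ν d hdmeas S hS τ hcocycle m A hAmeas hAdisj hAcover dj hdj
end

section
/- Let A ⊆ M be measurable and suppose there is a constant d_A ∈ ℝ^n with d(X, τ) = d_A for all X ∈ S(A). Then for every t ∈ ℝ, T_{t+τ}(S(A)) = T_t(A) + ν(A) · d_A. (This is the exact finite-time form of Eq. (29) of the paper, the order-k term of the wave-number expansion of the de Rham-type equation: T(φ^τ A) = T(A) + ν(A) d(X_{φ^τ A}, τ).) -/
/-!
The cocycle identity splits `d(·, t + τ)` on `S(A)` into `d(·, τ)`, which is the constant `d_A`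
there, and `d(S⁻¹ ·, t)`. The first part integrates to `ν(S(A)) • d_A = ν(A) • d_A`, and since `S`
preserves `ν` the change of variables `X = S Y` turns the second into `∫_A d(Y, t) dν`.
-/

open MeasureTheory

theorem MeasureTheory.setIntegral_eq_smul_of_forall_mem {α E : Type*} [MeasurableSpace α]
    {μ : Measure α} [NormedAddCommGroup E] [NormedSpace ℝ E] [CompleteSpace E]
    [MeasurableSpace E] [MeasurableSingletonClass E] {f : α → E} (hf : Measurable f)
    {s : Set α} {c : E} (hfs : ∀ x ∈ s, f x = c) :
    ∫ x in s, f x ∂μ = μ.real s • c := by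
  -- `s` need not be measurable: it sits inside the measurable level set `f ⁻¹' {c}`.
  have hf_ae : ∀ᵐ x ∂μ.restrict s, f x = c :=
    ae_restrict_of_ae_restrict_of_subset hfs (ae_restrict_mem (hf (measurableSet_singleton c)))
  rw [integral_congr_ae hf_ae, setIntegral_const]

theorem MeasureTheory.MeasurePreserving.measureReal_image_emb {α β : Type*} [MeasurableSpace α]
    [MeasurableSpace β] {μ : Measure α} {ν : Measure β} {f : α → β} (hf : MeasurePreserving f μ ν)
    (hfe : MeasurableEmbedding f) (s : Set α) :
    ν.real (f '' s) = μ.real s := by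
  rw [measureReal_def, measureReal_def, ← hf.map_eq, hfe.map_apply,
    hfe.injective.preimage_image]

theorem T_deRham_order_k_general {M : Type*} [MeasurableSpace M]
    (ν : Measure M) [IsFiniteMeasure ν]
    {n : ℕ} (d : M → ℝ → Fin n → ℝ)
    (hdmeas : ∀ s : ℝ, Measurable fun X => d X s)
    (hdbd : ∀ s : ℝ, ∃ C : ℝ, ∀ X : M, ‖d X s‖ ≤ C)
    (S : M ≃ M) (hS : MeasurePreserving S ν ν) (hS' : MeasurePreserving S.symm ν ν)
    (τ : ℝ)
    (hcocycle : ∀ (X : M) (t : ℝ), d X (t + τ) = d X τ + d (S.symm X) t)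
    (A : Set M)
    (dA : Fin n → ℝ) (hdA : ∀ X ∈ S '' A, d X τ = dA) :
    ∀ t : ℝ,
      (∫ X in S '' A, d X (t + τ) ∂ν)
        = (∫ X in A, d X t ∂ν) + (ν A).toReal • dA := by
  intro t
  have hSe : MeasurableEmbedding S :=
    (MeasurableEquiv.mk S hS.measurable hS'.measurable).measurableEmbedding
  have hint (s : ℝ) : Integrable (fun X => d X s) ν := by
    obtain ⟨C, hC⟩ := hdbd s
    exact .of_bound (hdmeas s).aestronglyMeasurable C (.of_forall hC)
  calc (∫ X in S '' A, d X (t + τ) ∂ν)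
      = (∫ X in S '' A, d X τ ∂ν) + ∫ X in S '' A, d (S.symm X) t ∂ν := by
        simp_rw [hcocycle]
        exact integral_add (hint τ).restrict (hS'.integrable_comp_of_integrable (hint t)).restrict
    _ = ν.real A • dA + ∫ X in A, d X t ∂ν := by
        rw [setIntegral_eq_smul_of_forall_mem (hdmeas τ) hdA, hS.measureReal_image_emb hSe,
          hS.setIntegral_image_emb hSe]
        simp only [Equiv.symm_apply_apply]
    _ = (∫ X in A, d X t ∂ν) + (ν A).toReal • dA := add_comm _ _

/-- exact finite-time form of Eq. (29): if the time-τ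
displacement is constant equal to `d_A` on `S(A)`, then
`T_{t+τ}(S(A)) = T_t(A) + ν(A) ⬝ d_A`, where `T_t(A) = ∫_A d(X,t) dν`. -/
theorem T_deRham_order_k {M : Type*} [MeasurableSpace M]
    (ν : Measure M) [IsFiniteMeasure ν] (hν : 0 < ν Set.univ)
    {n : ℕ} (hn : 1 ≤ n) (d : M → ℝ → Fin n → ℝ)
    (hdmeas : ∀ s : ℝ, Measurable fun X => d X s)
    (hdbd : ∀ s : ℝ, ∃ C : ℝ, ∀ X : M, ‖d X s‖ ≤ C)
    (S : M ≃ M) (hS : MeasurePreserving S ν ν) (hS' : MeasurePreserving S.symm ν ν)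
    (τ : ℝ)
    (hcocycle : ∀ (X : M) (t : ℝ), d X (t + τ) = d X τ + d (S.symm X) t)
    (A : Set M) (hA : MeasurableSet A)
    (dA : Fin n → ℝ) (hdA : ∀ X ∈ S '' A, d X τ = dA) :
    ∀ t : ℝ,
      (∫ X in S '' A, d X (t + τ) ∂ν)
        = (∫ X in A, d X t ∂ν) + (ν A).toReal • dA :=
  T_deRham_order_k_general ν d hdmeas hdbd S hS hS' τ hcocycle A dA hdA
end

section
/- Let A_1, …, A_m be a finite measurable partition of M into pairwise disjoint sets with ν(A_j) > 0 for every j, and suppose that for each j there is a constant d_j ∈ ℝ^n with d(X, τ) = d_j for all X ∈ S(A_j). Then for every t ∈ ℝ and all components a, b ∈ {1, …, n}: ∑_{j=1}^m (1/ν(A_j)) [ T_t(A_j)_a T_t(A_j)_b − T_{t+τ}(S(A_j))_a T_{t+τ}(S(A_j))_b ] = −( ∫_M d_a(X, t+τ) d_b(X, t+τ) dν(X) − ∫_M d_a(X, t) d_b(X, t) dν(X) ). (This identity is the core of the passage from Eq. (37) to Eq. (38) in the paper's entropy production calculation, combining Eq. (29) with the sum rule Eq. (sumrule*).) -/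
/-!
The cocycle identity together with `d(·, τ) = d_j` on `S(A_j)` gives
`d(S X, t + τ) = d_j + d(X, t)` for `X ∈ A_j`. After the measure-preserving change of
variables `X ↦ S X`, every integral over `S(A_j)` becomes an integral over `A_j` of an affine
expression in `d(·, t)`, and both sides of the identity reduce, cell by cell, to
`-(ν(A_j) d_{j,a} d_{j,b} + d_{j,a} T_t(A_j)_b + d_{j,b} T_t(A_j)_a)`.
-/

open MeasureTheory Set Function
open scoped ENNReal

section

variable {M : Type*} [MeasurableSpace M] {ν : Measure M}

theorem integral_eq_sum_setIntegral_of_partition {E : Type*} [NormedAddCommGroup E]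
    [NormedSpace ℝ E] {ι : Type*} [Fintype ι] {f : M → E} (hf : Integrable f ν)
    {B : ι → Set M} (hB : ∀ i, MeasurableSet (B i)) (hdisj : Pairwise (Disjoint on B))
    (hcover : ⋃ i, B i = univ) :
    ∫ x, f x ∂ν = ∑ i, ∫ x in B i, f x ∂ν := by
  rw [← setIntegral_univ, ← hcover, integral_iUnion_fintype hB hdisj fun i => hf.integrableOn]

theorem MeasureTheory.MeasurePreserving.setIntegral_image_emb_of_eqOn {E N : Type*}
    [NormedAddCommGroup E] [NormedSpace ℝ E] [MeasurableSpace N] {μ : Measure N} {S : M → N}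
    (hS : MeasurePreserving S ν μ) (hemb : MeasurableEmbedding S) {A : Set M}
    (hA : MeasurableSet A) {f : N → E} {g : M → E} (hfg : EqOn (f ∘ S) g A) :
    ∫ y in S '' A, f y ∂μ = ∫ x in A, g x ∂ν := by
  rw [hS.setIntegral_image_emb hemb]
  exact setIntegral_congr_fun hA hfg

section Bounded

variable [IsFiniteMeasure ν] {ι : Type*} [Fintype ι] {F : M → ι → ℝ}

theorem integrable_of_measurable_of_bounded (hF : Measurable F)
    (hbd : ∃ C, ∀ x, ‖F x‖ ≤ C) : Integrable F ν :=
  let ⟨C, hC⟩ := hbd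
  .of_bound hF.aestronglyMeasurable C (ae_of_all _ hC)

theorem integrable_eval_mul_eval_of_bounded (hF : Measurable F)
    (hbd : ∃ C, ∀ x, ‖F x‖ ≤ C) (a b : ι) : Integrable (fun x => F x a * F x b) ν := by
  obtain ⟨C, hC⟩ := hbd
  exact ((integrable_of_measurable_of_bounded hF ⟨C, hC⟩).eval b).bdd_mul
    hF.eval.aestronglyMeasurable (ae_of_all _ fun x => (norm_le_pi_norm (F x) a).trans (hC x))

end Bounded

section Cell

variable {s : Set M} {u v : M → ℝ}

theorem setIntegral_const_add (hs : ν s ≠ ∞) (hu : IntegrableOn u s ν) (p : ℝ) :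
    ∫ x in s, (p + u x) ∂ν = ν.real s * p + ∫ x in s, u x ∂ν := by
  rw [integral_add (integrableOn_const (C := p) hs) hu, setIntegral_const, smul_eq_mul]

theorem setIntegral_const_add_mul_const_add (hs : ν s ≠ ∞) (hu : IntegrableOn u s ν)
    (hv : IntegrableOn v s ν) (huv : IntegrableOn (fun x => u x * v x) s ν) (p q : ℝ) :
    ∫ x in s, (p + u x) * (q + v x) ∂ν
      = ν.real s * (p * q) + p * ∫ x in s, v x ∂ν + q * ∫ x in s, u x ∂ν
        + ∫ x in s, u x * v x ∂ν := by
  have hexpand : ∀ x, (p + u x) * (q + v x) = p * q + (p * v x + q * u x) + u x * v x :=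
    fun x => by ring
  have hlin : IntegrableOn (fun x => p * v x + q * u x) s ν :=
    (hv.const_mul p).add (hu.const_mul q)
  have haff : IntegrableOn (fun x => p * q + (p * v x + q * u x)) s ν :=
    (integrableOn_const (C := p * q) hs).add hlin
  simp_rw [hexpand]
  rw [integral_add haff huv, integral_add (integrableOn_const (C := p * q) hs) hlin,
    integral_add (hv.const_mul p) (hu.const_mul q), setIntegral_const, smul_eq_mul,
    integral_const_mul, integral_const_mul]
  ring

theorem one_div_measureReal_mul_setIntegral_shift (hs : ν s ≠ ∞) (hs0 : ν s ≠ 0)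
    (hu : IntegrableOn u s ν) (hv : IntegrableOn v s ν)
    (huv : IntegrableOn (fun x => u x * v x) s ν) (p q : ℝ) :
    1 / ν.real s * ((∫ x in s, u x ∂ν) * (∫ x in s, v x ∂ν)
        - (∫ x in s, (p + u x) ∂ν) * (∫ x in s, (q + v x) ∂ν))
      = -((∫ x in s, (p + u x) * (q + v x) ∂ν) - ∫ x in s, u x * v x ∂ν) := by
  have hvol : ν.real s ≠ 0 := (measureReal_ne_zero_iff hs).mpr hs0
  rw [setIntegral_const_add hs hu, setIntegral_const_add hs hv,
    setIntegral_const_add_mul_const_add hs hu hv huv]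
  field_simp
  ring

end Cell

end

theorem entropy_production_core_identity_general {M : Type*} [MeasurableSpace M]
    (ν : Measure M) [IsFiniteMeasure ν]
    {n : ℕ} (d : M → ℝ → Fin n → ℝ)
    (hdmeas : ∀ s : ℝ, Measurable fun X => d X s)
    (hdbd : ∀ s : ℝ, ∃ C : ℝ, ∀ X : M, ‖d X s‖ ≤ C)
    (S : M ≃ M) (hS : MeasurePreserving S ν ν) (hS' : MeasurePreserving S.symm ν ν)
    (τ : ℝ)
    (hcocycle : ∀ (X : M) (t : ℝ), d X (t + τ) = d X τ + d (S.symm X) t)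
    (m : ℕ) (A : Fin m → Set M)
    (hAmeas : ∀ j, MeasurableSet (A j))
    (hAdisj : ∀ i j, i ≠ j → Disjoint (A i) (A j))
    (hAcover : (⋃ j, A j) = Set.univ)
    (hApos : ∀ j, 0 < ν (A j))
    (dj : Fin m → Fin n → ℝ)
    (hdj : ∀ j, ∀ X ∈ S '' A j, d X τ = dj j) :
    ∀ (t : ℝ) (a b : Fin n),
      (∑ j, (1 / (ν (A j)).toReal) *
          ((∫ X in A j, d X t a ∂ν) * (∫ X in A j, d X t b ∂ν)
            - (∫ X in S '' A j, d X (t + τ) a ∂ν)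
                * (∫ X in S '' A j, d X (t + τ) b ∂ν)))
        = -((∫ X, d X (t + τ) a * d X (t + τ) b ∂ν)
              - ∫ X, d X t a * d X t b ∂ν) := by
  intro t a b
  have hd_int (s : ℝ) := integrable_of_measurable_of_bounded (ν := ν) (hdmeas s) (hdbd s)
  have hdd_int (s : ℝ) := integrable_eval_mul_eval_of_bounded (ν := ν) (hdmeas s) (hdbd s) a b
  let Se : M ≃ᵐ M := ⟨S, hS.measurable, hS'.measurable⟩
  have hshift : ∀ j, ∀ X ∈ A j, d (S X) (t + τ) = dj j + d X t := fun j X hX => by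
    rw [hcocycle, hdj j _ (mem_image_of_mem S hX), S.symm_apply_apply]
  have hpullback (j : Fin m) (f : (Fin n → ℝ) → ℝ) :
      ∫ Y in S '' A j, f (d Y (t + τ)) ∂ν = ∫ X in A j, f (dj j + d X t) ∂ν :=
    hS.setIntegral_image_emb_of_eqOn Se.measurableEmbedding (hAmeas j)
      fun X hX => congrArg f (hshift j X hX)
  have hSAmeas (j : Fin m) : MeasurableSet (S '' A j) := Se.measurableSet_image.mpr (hAmeas j)
  have hSAdisj : Pairwise (Disjoint on fun j => S '' A j) := fun i j hij =>
    (disjoint_image_iff S.injective).mpr (hAdisj i j hij)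
  have hSAcover : ⋃ j, S '' A j = univ := by
    rw [← image_iUnion, hAcover, image_univ_of_surjective S.surjective]
  rw [integral_eq_sum_setIntegral_of_partition (hdd_int (t + τ)) hSAmeas hSAdisj hSAcover,
    integral_eq_sum_setIntegral_of_partition (hdd_int t) hAmeas (fun i j => hAdisj i j) hAcover,
    ← Finset.sum_sub_distrib, ← Finset.sum_neg_distrib]
  refine Finset.sum_congr rfl fun j _ => ?_
  rw [hpullback j (· a), hpullback j (· b), hpullback j fun v => v a * v b]
  exact one_div_measureReal_mul_setIntegral_shift (measure_ne_top ν (A j)) (hApos j).ne'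
    ((hd_int t).eval a).integrableOn ((hd_int t).eval b).integrableOn (hdd_int t).integrableOn
    _ _

/-- the core identity of the entropy production calculation
(from Eq. (37) to Eq. (38)):
`∑_j (1/ν(A_j)) [ T_t(A_j)_a T_t(A_j)_b − T_{t+τ}(S(A_j))_a T_{t+τ}(S(A_j))_b ]
 = −( ∫_M d_a(X,t+τ) d_b(X,t+τ) dν − ∫_M d_a(X,t) d_b(X,t) dν )`,
where `T_t(A)_a = ∫_A d_a(X,t) dν`. -/
theorem entropy_production_core_identity {M : Type*} [MeasurableSpace M]
    (ν : Measure M) [IsFiniteMeasure ν] (hν : 0 < ν Set.univ)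
    {n : ℕ} (hn : 1 ≤ n) (d : M → ℝ → Fin n → ℝ)
    (hdmeas : ∀ s : ℝ, Measurable fun X => d X s)
    (hdbd : ∀ s : ℝ, ∃ C : ℝ, ∀ X : M, ‖d X s‖ ≤ C)
    (S : M ≃ M) (hS : MeasurePreserving S ν ν) (hS' : MeasurePreserving S.symm ν ν)
    (τ : ℝ)
    (hcocycle : ∀ (X : M) (t : ℝ), d X (t + τ) = d X τ + d (S.symm X) t)
    (m : ℕ) (A : Fin m → Set M)
    (hAmeas : ∀ j, MeasurableSet (A j))
    (hAdisj : ∀ i j, i ≠ j → Disjoint (A i) (A j))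
    (hAcover : (⋃ j, A j) = Set.univ)
    (hApos : ∀ j, 0 < ν (A j))
    (dj : Fin m → Fin n → ℝ)
    (hdj : ∀ j, ∀ X ∈ S '' A j, d X τ = dj j) :
    ∀ (t : ℝ) (a b : Fin n),
      (∑ j, (1 / (ν (A j)).toReal) *
          ((∫ X in A j, d X t a ∂ν) * (∫ X in A j, d X t b ∂ν)
            - (∫ X in S '' A j, d X (t + τ) a ∂ν)
                * (∫ X in S '' A j, d X (t + τ) b ∂ν)))
        = -((∫ X, d X (t + τ) a * d X (t + τ) b ∂ν)
              - ∫ X, d X t a * d X t b ∂ν) :=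
  entropy_production_core_identity_general ν d hdmeas hdbd S hS hS' τ hcocycle m A hAmeas hAdisj
    hAcover hApos dj hdj
end

section
/- Let A_1, …, A_m and B_1, …, B_m be two finite measurable partitions of the same measurable set M_l into pairwise disjoint sets, with ν(B_j) = ν(A_j) > 0 for every j (as holds when B_j = Φ^τ A_j for a measure-preserving map Φ^τ). Let μ be a finite (signed) measure on M_l and write δμ(E) := μ(E) − ν(E); since both families partition M_l, ∑_j δμ(B_j) = ∑_j δμ(A_j). Assume |δμ(A_j)| ≤ ν(A_j)/2 and |δμ(B_j)| ≤ ν(A_j)/2 for all j, and define the entropy production Δ_iS := −∑_{j=1}^m μ(A_j) ln(μ(A_j)/ν(A_j)) + ∑_{j=1}^m μ(B_j) ln(μ(B_j)/ν(B_j)). Then | Δ_iS − (1/2) ∑_{j=1}^m [ δμ(B_j)² − δμ(A_j)² ] / ν(A_j) | ≤ (2/3) ∑_{j=1}^m ( |δμ(A_j)|³ + |δμ(B_j)|³ ) / ν(A_j)². (This is the quadratic expansion, Eq. (36), of the entropy production Eq. (35) of the paper, where B_j = φ^τ A_j.) -/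
/-!
Write `a = ν(A_j)`, `x = δμ(A_j)`, `y = δμ(B_j)`, so that `μ(A_j) = a + x` and `μ(B_j) = a + y`.
Each entropy term expands as `(a + x) ln((a + x)/a) = x + x²/(2a) + R(a, x)`. The linear terms
cancel in `Δ_iS` because both families partition `M_l` with equal `ν`-masses, so `∑ x = ∑ y`.
The remainder is `a` times `(1 + t) ln(1 + t) - t - t²/2` at `t = x/a`, whose derivative
`ln(1 + t) - t` is at most `2t²` in absolute value for `|t| ≤ 1/2`; integrating gives
`|R(a, x)| ≤ (2/3)|x|³/a²`.
-/

open MeasureTheory Real Finset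

lemma abs_log_one_add_sub_self_le {s : ℝ} (hs : |s| ≤ 1 / 2) :
    |log (1 + s) - s| ≤ 2 * s ^ 2 := by
  have h := abs_log_sub_add_sum_range_le (x := -s) (by rw [abs_neg]; linarith) 1
  simp only [range_one, sum_singleton, zero_add, pow_one, Nat.cast_zero, div_one, sub_neg_eq_add,
    abs_neg] at h
  calc |log (1 + s) - s| = |-s + log (1 + s)| := by ring_nf
    _ ≤ s ^ 2 / (1 - |s|) := by rwa [← sq_abs s]
    _ ≤ 2 * s ^ 2 := by
      rw [div_le_iff₀ (by linarith)]
      nlinarith [sq_nonneg s]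

lemma abs_one_add_mul_log_one_add_sub_le {t : ℝ} (ht : |t| ≤ 1 / 2) :
    |(1 + t) * log (1 + t) - t - t ^ 2 / 2| ≤ 2 / 3 * |t| ^ 3 := by
  have hsmall : ∀ s ∈ Set.uIcc 0 t, |s| ≤ 1 / 2 := fun s hs =>
    (by simpa using Set.abs_sub_left_of_mem_uIcc hs : |s| ≤ |t|).trans ht
  have hpos : ∀ s ∈ Set.uIcc 0 t, 1 + s ≠ 0 := fun s hs => by
    linarith [(abs_le.1 (hsmall s hs)).1]
  have hderiv : ∀ s ∈ Set.uIcc 0 t,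
      HasDerivAt (fun s => (1 + s) * log (1 + s) - s - s ^ 2 / 2) (log (1 + s) - s) s := by
    intro s hs
    have h1 : HasDerivAt (fun s : ℝ => 1 + s) 1 s := (hasDerivAt_id' s).const_add 1
    refine (((h1.mul (h1.log (hpos s hs))).sub (hasDerivAt_id' s)).sub
      ((hasDerivAt_pow 2 s).div_const 2)).congr_deriv ?_
    field_simp [hpos s hs]
    ring
  have hcont : ContinuousOn (fun s => log (1 + s) - s) (Set.uIcc 0 t) :=
    ((continuousOn_const.add continuousOn_id).log hpos).sub continuousOn_id
  have hftc := intervalIntegral.integral_eq_sub_of_hasDerivAt hderiv hcont.intervalIntegrable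
  simp only [add_zero, log_one, mul_zero, sub_zero, ne_eq, OfNat.ofNat_ne_zero,
    not_false_eq_true, zero_pow, zero_div] at hftc
  rw [← hftc]
  calc |∫ s in 0..t, log (1 + s) - s| ≤ |∫ s in 0..t, 2 * s ^ 2| := by
        rw [← Real.norm_eq_abs]
        refine intervalIntegral.norm_integral_le_abs_of_norm_le ?_
          ((by fun_prop : Continuous fun s : ℝ => 2 * s ^ 2).intervalIntegrable 0 t)
        filter_upwards [ae_restrict_mem measurableSet_uIoc] with s hs
        exact abs_log_one_add_sub_self_le (hsmall s (Set.uIoc_subset_uIcc hs))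
    _ = 2 / 3 * |t| ^ 3 := by
        rw [intervalIntegral.integral_const_mul, integral_pow, abs_mul, abs_div]
        norm_num [abs_pow]
        ring

lemma abs_add_mul_log_add_div_sub_le {a x : ℝ} (ha : 0 ≤ a) (hx : |x| ≤ a / 2) :
    |(a + x) * log ((a + x) / a) - x - x ^ 2 / (2 * a)| ≤ 2 / 3 * |x| ^ 3 / a ^ 2 := by
  rcases ha.eq_or_lt with rfl | ha
  · obtain rfl : x = 0 := abs_nonpos_iff.1 (by linarith)
    simp
  have ht : |x / a| ≤ 1 / 2 := by
    rw [abs_div, abs_of_pos ha, div_le_iff₀ ha]; linarith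
  calc |(a + x) * log ((a + x) / a) - x - x ^ 2 / (2 * a)|
      = a * |(1 + x / a) * log (1 + x / a) - x / a - (x / a) ^ 2 / 2| := by
        rw [← abs_of_pos ha, ← abs_mul, abs_of_pos ha, add_div, div_self ha.ne']
        congr 1
        field_simp
    _ ≤ a * (2 / 3 * |x / a| ^ 3) :=
        mul_le_mul_of_nonneg_left (abs_one_add_mul_log_one_add_sub_le ht) ha.le
    _ = 2 / 3 * |x| ^ 3 / a ^ 2 := by
        rw [abs_div, abs_of_pos ha]; field_simp

lemma abs_sum_mul_log_sub_sum_mul_log_sub_le {ι : Type*} (s : Finset ι) {a x y : ι → ℝ}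
    (ha : ∀ i ∈ s, 0 ≤ a i) (hx : ∀ i ∈ s, |x i| ≤ a i / 2) (hy : ∀ i ∈ s, |y i| ≤ a i / 2)
    (hsum : ∑ i ∈ s, x i = ∑ i ∈ s, y i) :
    |-(∑ i ∈ s, (a i + x i) * log ((a i + x i) / a i))
        + ∑ i ∈ s, (a i + y i) * log ((a i + y i) / a i)
        - 1 / 2 * ∑ i ∈ s, (y i ^ 2 - x i ^ 2) / a i|
      ≤ 2 / 3 * ∑ i ∈ s, (|x i| ^ 3 + |y i| ^ 3) / a i ^ 2 := by
  set r : ι → ℝ → ℝ := fun i z => (a i + z) * log ((a i + z) / a i) - z - z ^ 2 / (2 * a i)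
  have hr : ∀ i ∈ s, ∀ z, |z| ≤ a i / 2 → |r i z| ≤ 2 / 3 * |z| ^ 3 / a i ^ 2 :=
    fun i hi _ hz => abs_add_mul_log_add_div_sub_le (ha i hi) hz
  have hid : -(∑ i ∈ s, (a i + x i) * log ((a i + x i) / a i))
        + ∑ i ∈ s, (a i + y i) * log ((a i + y i) / a i)
        - 1 / 2 * ∑ i ∈ s, (y i ^ 2 - x i ^ 2) / a i
      = ∑ i ∈ s, (r i (y i) - r i (x i)) := by
    simp only [r, sum_sub_distrib, sub_div, div_mul_eq_div_div_swap, ← sum_div]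
    rw [hsum]
    ring
  rw [hid, mul_sum]
  refine (abs_sum_le_sum_abs _ _).trans (sum_le_sum fun i hi => ?_)
  calc |r i (y i) - r i (x i)| ≤ |r i (y i)| + |r i (x i)| := abs_sub _ _
    _ ≤ 2 / 3 * |y i| ^ 3 / a i ^ 2 + 2 / 3 * |x i| ^ 3 / a i ^ 2 :=
        add_le_add (hr i hi _ (hy i hi)) (hr i hi _ (hx i hi))
    _ = 2 / 3 * ((|x i| ^ 3 + |y i| ^ 3) / a i ^ 2) := by ring

theorem entropy_production_quadratic_expansion_general {X : Type*} [MeasurableSpace X]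
    (ν : Measure X)
    (μ : SignedMeasure X)
    (Ml : Set X)
    (m : ℕ) (A B : Fin m → Set X)
    (hAmeas : ∀ j, MeasurableSet (A j)) (hBmeas : ∀ j, MeasurableSet (B j))
    (hAdisj : ∀ i j, i ≠ j → Disjoint (A i) (A j))
    (hBdisj : ∀ i j, i ≠ j → Disjoint (B i) (B j))
    (hAcover : (⋃ j, A j) = Ml) (hBcover : (⋃ j, B j) = Ml)
    (hνeq : ∀ j, ν (B j) = ν (A j))
    (δμ : Set X → ℝ) (hδμ : ∀ E : Set X, δμ E = μ E - (ν E).toReal)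
    (hδA : ∀ j, |δμ (A j)| ≤ (ν (A j)).toReal / 2)
    (hδB : ∀ j, |δμ (B j)| ≤ (ν (A j)).toReal / 2)
    (ΔiS : ℝ)
    (hΔiS : ΔiS = -(∑ j, μ (A j) * Real.log (μ (A j) / (ν (A j)).toReal))
        + ∑ j, μ (B j) * Real.log (μ (B j) / (ν (B j)).toReal)) :
    |ΔiS - (1 / 2) * ∑ j, (δμ (B j) ^ 2 - δμ (A j) ^ 2) / (ν (A j)).toReal|
      ≤ (2 / 3) * ∑ j, (|δμ (A j)| ^ 3 + |δμ (B j)| ^ 3) / (ν (A j)).toReal ^ 2 := by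
  have hνB : ∀ j, (ν (B j)).toReal = (ν (A j)).toReal := fun j => by rw [hνeq]
  have hμA : ∀ j, μ (A j) = (ν (A j)).toReal + δμ (A j) := fun j => by rw [hδμ]; ring
  have hμB : ∀ j, μ (B j) = (ν (A j)).toReal + δμ (B j) := fun j => by rw [hδμ, hνB]; ring
  have hμ_sum : ∑ j, μ (A j) = ∑ j, μ (B j) := by
    calc ∑ j, μ (A j) = μ Ml := by
          rw [← hAcover, VectorMeasure.of_disjoint_iUnion hAmeas hAdisj, tsum_fintype]
      _ = ∑ j, μ (B j) := by
          rw [← hBcover, VectorMeasure.of_disjoint_iUnion hBmeas hBdisj, tsum_fintype]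
  have hδ_sum : ∑ j, δμ (A j) = ∑ j, δμ (B j) := by
    simp only [hδμ, sum_sub_distrib, hμ_sum, hνB]
  subst hΔiS
  simp only [hμA, hμB, hνB]
  exact abs_sum_mul_log_sub_sum_mul_log_sub_le univ (fun j _ => ENNReal.toReal_nonneg)
    (fun j _ => hδA j) (fun j _ => hδB j) hδ_sum

/-- quadratic expansion, Eq. (36), of the entropy production,
Eq. (35). For two finite measurable partitions `{A_j}` and `{B_j}` of the same
set `M_l` with `ν(B_j) = ν(A_j) > 0` and deviations `δμ` at most half the
equilibrium measures, the entropy production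
`Δ_iS = −∑_j μ(A_j) ln(μ(A_j)/ν(A_j)) + ∑_j μ(B_j) ln(μ(B_j)/ν(B_j))`
agrees with `(1/2) ∑_j [δμ(B_j)² − δμ(A_j)²]/ν(A_j)` up to an error bounded by
`(2/3) ∑_j (|δμ(A_j)|³ + |δμ(B_j)|³)/ν(A_j)²`. -/
theorem entropy_production_quadratic_expansion {X : Type*} [MeasurableSpace X]
    (ν : Measure X) [IsFiniteMeasure ν]
    (μ : SignedMeasure X)
    (Ml : Set X) (hMl : MeasurableSet Ml)
    (m : ℕ) (A B : Fin m → Set X)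
    (hAmeas : ∀ j, MeasurableSet (A j)) (hBmeas : ∀ j, MeasurableSet (B j))
    (hAdisj : ∀ i j, i ≠ j → Disjoint (A i) (A j))
    (hBdisj : ∀ i j, i ≠ j → Disjoint (B i) (B j))
    (hAcover : (⋃ j, A j) = Ml) (hBcover : (⋃ j, B j) = Ml)
    (hνeq : ∀ j, ν (B j) = ν (A j)) (hνpos : ∀ j, 0 < ν (A j))
    (δμ : Set X → ℝ) (hδμ : ∀ E : Set X, δμ E = μ E - (ν E).toReal)
    (hδA : ∀ j, |δμ (A j)| ≤ (ν (A j)).toReal / 2)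
    (hδB : ∀ j, |δμ (B j)| ≤ (ν (A j)).toReal / 2)
    (ΔiS : ℝ)
    (hΔiS : ΔiS = -(∑ j, μ (A j) * Real.log (μ (A j) / (ν (A j)).toReal))
        + ∑ j, μ (B j) * Real.log (μ (B j) / (ν (B j)).toReal)) :
    |ΔiS - (1 / 2) * ∑ j, (δμ (B j) ^ 2 - δμ (A j) ^ 2) / (ν (A j)).toReal|
      ≤ (2 / 3) * ∑ j, (|δμ (A j)| ^ 3 + |δμ (B j)| ^ 3) / (ν (A j)).toReal ^ 2 :=
  entropy_production_quadratic_expansion_general ν μ Ml m A B hAmeas hBmeas hAdisj hBdisj hAcover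
    hBcover hνeq δμ hδμ hδA hδB ΔiS hΔiS
end
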